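/- Let A_q ∈ ℝ^{n_q×n_q}, K_{q1,q2} ∈ ℝ^{n_{q2}×n_{q1}} (q1 ≠ q2), symmetric positive definite Q_q ∈ ℝ^{n_q×n_q}, and constants M, μ > 0 satisfy e^{−Mμ} K_{q1,q2}ᵀ Q_{q2} K_{q1,q2} ≺ Q_{q1} for all q1 ≠ q2 and A_qᵀ Q_q + Q_q A_q + M Q_q ≺ 0 for all q. Let S_q be invertible matrices such that Λ_q := (S_q^{−1})ᵀ Q_q S_q^{−1} is diagonal, and define the transformed matrices Ā_q = S_q A_q S_q^{−1} and K̄_{q1,q2} = S_{q2} K_{q1,q2} S_{q1}^{−1}. Fix truncation orders r_q ≤ n_q, write Λ_q = diag(Λ̂_q, Λ̌_q) with Λ̂_q the leading r_q×r_q block, and let Â_q be the leading r_q×r_q block of Ā_q and K̂_{q1,q2} the leading r_{q2}×r_{q1} block of K̄_{q1,q2}. Then e^{−Mμ} K̂_{q1,q2}ᵀ Λ̂_{q2} K̂_{q1,q2} ≺ Λ̂_{q1} for all q1 ≠ q2, and Â_qᵀ Λ̂_q + Λ̂_q Â_q + M Λ̂_q ≺ 0 for all q. -/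

import Mathlib

/-!
In the coordinates `x̄ = S_q x` both LMIs are congruences of the original ones by the
invertible matrix `S_q⁻¹`, so they stay positive definite. Truncation takes a principal
submatrix, which preserves positive definiteness; because `Λ_q` is diagonal, the principal block
of `Āᵀ Λ + Λ Ā` is `Âᵀ Λ̂ + Λ̂ Â`. For the jump LMI the principal block of `K̄ᵀ Λ₂ K̄` is
`Bᵀ Λ₂ B` with `B` the leading columns of `K̄`, and it exceeds `K̂ᵀ Λ̂₂ K̂` by the contribution
`∑_{k > r} λ_k bₖᵀ bₖ ⪰ 0` of the discarded rows `bₖ` of `B`.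
-/

open Matrix

variable {R l m n : Type*} [Fintype m] [Fintype n] [DecidableEq m] [DecidableEq n]

def jumpLMI {n₁ n₂ : Type*} [Fintype n₂] [CommRing R] (c : R) (Q₁ : Matrix n₁ n₁ R)
    (Q₂ : Matrix n₂ n₂ R) (K : Matrix n₂ n₁ R) : Matrix n₁ n₁ R :=
  Q₁ - c • (Kᵀ * Q₂ * K)

def flowLMI [CommRing R] (c : R) (A Q : Matrix n n R) : Matrix n n R :=
  -(Aᵀ * Q + Q * A + c • Q)

section ChangeOfCoordinates

variable [CommRing R]

theorem transpose_inv_mul_jumpLMI_mul_inv {n₁ n₂ : Type*} [Fintype n₁] [Fintype n₂]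
    [DecidableEq n₁] [DecidableEq n₂] (c : R) (S₁ : Matrix n₁ n₁ R) {S₂ : Matrix n₂ n₂ R}
    (hS₂ : IsUnit S₂.det) (Q₁ : Matrix n₁ n₁ R) (Q₂ : Matrix n₂ n₂ R) (K : Matrix n₂ n₁ R) :
    (S₁⁻¹)ᵀ * jumpLMI c Q₁ Q₂ K * S₁⁻¹ =
      jumpLMI c ((S₁⁻¹)ᵀ * Q₁ * S₁⁻¹) ((S₂⁻¹)ᵀ * Q₂ * S₂⁻¹) (S₂ * K * S₁⁻¹) := by
  simp [jumpLMI, Matrix.mul_assoc, transpose_mul, transpose_nonsing_inv, hS₂, Matrix.mul_sub,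
    Matrix.sub_mul]

theorem transpose_inv_mul_flowLMI_mul_inv (c : R) {S : Matrix n n R} (hS : IsUnit S.det)
    (A Q : Matrix n n R) :
    (S⁻¹)ᵀ * flowLMI c A Q * S⁻¹ = flowLMI c (S * A * S⁻¹) ((S⁻¹)ᵀ * Q * S⁻¹) := by
  simp [flowLMI, Matrix.mul_assoc, transpose_mul, transpose_nonsing_inv, hS, Matrix.mul_add,
    Matrix.add_mul]

end ChangeOfCoordinates

section Truncation

theorem submatrix_mul_diagonal [Semiring R] (M : Matrix l n R) (d : n → R) (e : m → l)
    (f : m → n) : (M * diagonal d).submatrix e f = M.submatrix e f * diagonal (d ∘ f) := by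
  ext
  simp

theorem submatrix_diagonal_mul [Semiring R] (M : Matrix n l R) (d : n → R) (e : m → n)
    (f : m → l) : (diagonal d * M).submatrix e f = diagonal (d ∘ e) * M.submatrix e f := by
  ext
  simp

theorem transpose_submatrix_mul_diagonal_mul_submatrix [CommSemiring R] (B : Matrix n l R)
    (d : n → R) {f : m → n} (hf : Function.Injective f) :
    (B.submatrix f id)ᵀ * diagonal (d ∘ f) * B.submatrix f id =
      Bᵀ * diagonal ((Set.range f).indicator d) * B := by
  ext a b
  simp only [mul_apply, diagonal_apply, transpose_apply, submatrix_apply, mul_ite, mul_zero,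
    Finset.sum_ite_eq', Finset.mem_univ, if_true, id_eq, Function.comp_apply]
  exact Fintype.sum_of_injective f hf _ _ (fun k hk => by simp [hk]) (fun i => by simp)

theorem posSemidef_transpose_mul_diagonal_mul_sub [Fintype l] (B : Matrix n l ℝ) {d : n → ℝ}
    (hd : 0 ≤ d) {f : m → n} (hf : Function.Injective f) :
    (Bᵀ * diagonal d * B -
      (B.submatrix f id)ᵀ * diagonal (d ∘ f) * B.submatrix f id).PosSemidef := by
  rw [transpose_submatrix_mul_diagonal_mul_submatrix B d hf, ← Matrix.sub_mul, ← Matrix.mul_sub,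
    diagonal_sub, ← Pi.sub_def, ← Set.indicator_compl]
  simpa using
    (PosSemidef.diagonal (Set.indicator_nonneg fun k _ => hd k)).conjTranspose_mul_mul_same B

theorem Matrix.PosDef.jumpLMI_submatrix {m₁ n₁ m₂ n₂ : Type*} [Fintype m₁] [Fintype m₂] [Fintype n₂]
    [DecidableEq m₂] [DecidableEq n₂] {c : ℝ} (hc : 0 ≤ c) (Λ₁ : Matrix n₁ n₁ ℝ)
    {Λ₂ : Matrix n₂ n₂ ℝ} (hΛ₂ : Λ₂.IsDiag) (hΛ₂pos : Λ₂.PosSemidef) {K : Matrix n₂ n₁ ℝ}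
    (h : (jumpLMI c Λ₁ Λ₂ K).PosDef) {f₁ : m₁ → n₁} (hf₁ : Function.Injective f₁)
    {f₂ : m₂ → n₂} (hf₂ : Function.Injective f₂) :
    (jumpLMI c (Λ₁.submatrix f₁ f₁) (Λ₂.submatrix f₂ f₂) (K.submatrix f₂ f₁)).PosDef := by
  obtain ⟨d, rfl⟩ : ∃ d, Λ₂ = diagonal d := ⟨_, hΛ₂.diagonal_diag.symm⟩
  have hd : 0 ≤ d := posSemidef_diagonal_iff.1 hΛ₂pos
  set B := K.submatrix id f₁
  have hsplit :
      jumpLMI c (Λ₁.submatrix f₁ f₁) ((diagonal d).submatrix f₂ f₂) (K.submatrix f₂ f₁) =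
        (jumpLMI c Λ₁ (diagonal d) K).submatrix f₁ f₁ +
          c • (Bᵀ * diagonal d * B -
            (B.submatrix f₂ id)ᵀ * diagonal (d ∘ f₂) * B.submatrix f₂ id) := by
    have hB : (Kᵀ * diagonal d * K).submatrix f₁ f₁ = Bᵀ * diagonal d * B := by
      ext i j
      simp [B, mul_apply]
    have hK : B.submatrix f₂ id = K.submatrix f₂ f₁ := rfl
    simp only [jumpLMI, submatrix_sub, submatrix_smul, Pi.sub_apply, Pi.smul_apply]
    rw [hB, hK, submatrix_diagonal _ _ hf₂]
    module
  rw [hsplit]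
  exact (h.submatrix hf₁).add_posSemidef
    ((posSemidef_transpose_mul_diagonal_mul_sub B hd hf₂).smul hc)

theorem Matrix.PosDef.flowLMI_submatrix {c : ℝ} {A Λ : Matrix n n ℝ} (hΛ : Λ.IsDiag)
    (h : (flowLMI c A Λ).PosDef) {f : m → n} (hf : Function.Injective f) :
    (flowLMI c (A.submatrix f f) (Λ.submatrix f f)).PosDef := by
  obtain ⟨d, rfl⟩ : ∃ d, Λ = diagonal d := ⟨_, hΛ.diagonal_diag.symm⟩
  simpa [flowLMI, submatrix_diagonal _ _ hf, submatrix_mul_diagonal, submatrix_diagonal_mul,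
    submatrix_add, submatrix_neg, submatrix_smul, transpose_submatrix] using h.submatrix hf

end Truncation

theorem stmt_13 {D : ℕ} (n : Fin D → ℕ)
    (A : (q : Fin D) → Matrix (Fin (n q)) (Fin (n q)) ℝ)
    (K : (q1 q2 : Fin D) → Matrix (Fin (n q2)) (Fin (n q1)) ℝ)
    (Q : (q : Fin D) → Matrix (Fin (n q)) (Fin (n q)) ℝ)
    (hQ : ∀ q, (Q q).PosDef)
    (Mc μ : ℝ)
    (hK : ∀ q1 q2, q1 ≠ q2 →
      (Q q1 - Real.exp (-(Mc * μ)) • ((K q1 q2)ᵀ * Q q2 * K q1 q2)).PosDef)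
    (hLyap : ∀ q, (-((A q)ᵀ * Q q + Q q * A q + Mc • Q q)).PosDef)
    (Sq : (q : Fin D) → Matrix (Fin (n q)) (Fin (n q)) ℝ)
    (hSq : ∀ q, IsUnit (Sq q).det)
    (hdiag : ∀ q, (((Sq q)⁻¹)ᵀ * Q q * (Sq q)⁻¹).IsDiag)
    (r : Fin D → ℕ) (hr : ∀ q, r q ≤ n q) :
    (∀ q1 q2, q1 ≠ q2 →
      (((((Sq q1)⁻¹)ᵀ * Q q1 * (Sq q1)⁻¹).submatrix (Fin.castLE (hr q1)) (Fin.castLE (hr q1))) -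
        Real.exp (-(Mc * μ)) •
          (((Sq q2 * K q1 q2 * (Sq q1)⁻¹).submatrix (Fin.castLE (hr q2)) (Fin.castLE (hr q1)))ᵀ *
            ((((Sq q2)⁻¹)ᵀ * Q q2 * (Sq q2)⁻¹).submatrix (Fin.castLE (hr q2)) (Fin.castLE (hr q2))) *
            ((Sq q2 * K q1 q2 * (Sq q1)⁻¹).submatrix (Fin.castLE (hr q2)) (Fin.castLE (hr q1))))).PosDef) ∧
    (∀ q,
      (-(((Sq q * A q * (Sq q)⁻¹).submatrix (Fin.castLE (hr q)) (Fin.castLE (hr q)))ᵀ *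
            ((((Sq q)⁻¹)ᵀ * Q q * (Sq q)⁻¹).submatrix (Fin.castLE (hr q)) (Fin.castLE (hr q))) +
          ((((Sq q)⁻¹)ᵀ * Q q * (Sq q)⁻¹).submatrix (Fin.castLE (hr q)) (Fin.castLE (hr q))) *
            ((Sq q * A q * (Sq q)⁻¹).submatrix (Fin.castLE (hr q)) (Fin.castLE (hr q))) +
          Mc • ((((Sq q)⁻¹)ᵀ * Q q * (Sq q)⁻¹).submatrix (Fin.castLE (hr q)) (Fin.castLE (hr q))))).PosDef) := by
  have hcongr : ∀ q {P : Matrix (Fin (n q)) (Fin (n q)) ℝ}, P.PosDef →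
      (((Sq q)⁻¹)ᵀ * P * (Sq q)⁻¹).PosDef := fun q P hP =>
    (IsUnit.posDef_star_left_conjugate_iff
      ((isUnit_iff_isUnit_det _).2 (isUnit_nonsing_inv_det _ (hSq q)))).2 hP
  refine ⟨fun q1 q2 hq => ?_, fun q => ?_⟩
  · refine PosDef.jumpLMI_submatrix (Real.exp_pos _).le _ (hdiag q2) (hcongr q2 (hQ q2)).posSemidef
      ?_ (Fin.castLE_injective _) (Fin.castLE_injective _)
    rw [← transpose_inv_mul_jumpLMI_mul_inv _ _ (hSq q2)]
    exact hcongr q1 (hK q1 q2 hq)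
  · refine PosDef.flowLMI_submatrix (hdiag q) ?_ (Fin.castLE_injective _)
    rw [← transpose_inv_mul_flowLMI_mul_inv _ (hSq q)]
    exact hcongr q (hLyap q)
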